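/- arXiv:1309.0713 — 2 statements merged into one kernel-verified Lean document; each statement's English description precedes it below -/
import Mathlib

section
/- Let l₁, …, l_k ∈ ℝ be ℤ-independent. Then the map π̂_L : G_Bohr → 𝕋^k, ψ ↦ (ψ(l₁), …, ψ(l_k)), is continuous, surjective, and open. -/
/-!
`G_Bohr` is a closed subgroup of the compact group `∏_{x ∈ ℝ} 𝕋`, hence compact, and evaluation
at `l₁, …, l_k` is a continuous homomorphism. It is surjective because ℚ-independence lets us
prescribe arbitrary angles `f(lᵢ) = aᵢ` for a ℚ-linear map `f : ℝ → ℝ`, and `x ↦ exp(i f(x))`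
is a (generally discontinuous) character. A continuous surjective homomorphism from a compact group onto
a Hausdorff group is a quotient map, and quotient homomorphisms of topological groups are open.
-/

/-- The Bohr compactification of `ℝ`, realized as the group of all (not necessarily
continuous) group homomorphisms `(ℝ, +) → 𝕋`, viewed as a subgroup of the product group
`∏_{x ∈ ℝ} 𝕋`; as a subtype it carries the topology of pointwise convergence. -/
noncomputable def bohrSubgroup : Subgroup (ℝ → Circle) where
  carrier := {ψ | ∀ x y : ℝ, ψ (x + y) = ψ x * ψ y}
  mul_mem' := by
    intro a b ha hb x y
    simp only [Pi.mul_apply, ha x y, hb x y]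
    exact mul_mul_mul_comm _ _ _ _
  one_mem' := by intro x y; simp
  inv_mem' := by
    intro a ha x y
    simp only [Pi.inv_apply, ha x y, mul_inv]

/-- The Bohr compactification of `ℝ` (as a type, with the topology of pointwise
convergence inherited from the product `∏_{x ∈ ℝ} 𝕋`). -/
abbrev GBohr : Type := bohrSubgroup

theorem LinearIndependent.exists_linearMap_apply_eq {ι K V W : Type*} [Field K]
    [AddCommGroup V] [Module K V] [AddCommGroup W] [Module K W] {v : ι → V}
    (hv : LinearIndependent K v) (w : ι → W) : ∃ f : V →ₗ[K] W, ∀ i, f (v i) = w i := by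
  obtain ⟨f, hf⟩ := LinearMap.exists_extend (Finsupp.linearCombination K w ∘ₗ hv.repr)
  refine ⟨f, fun i => ?_⟩
  have hvi : v i ∈ Submodule.span K (Set.range v) := Submodule.subset_span ⟨i, rfl⟩
  simpa [hv.repr_eq_single i ⟨v i, hvi⟩ rfl] using LinearMap.congr_fun hf ⟨v i, hvi⟩

theorem MonoidHom.isOpenMap_of_compactSpace {G H : Type*} [Group G] [TopologicalSpace G]
    [ContinuousMul G] [CompactSpace G] [Group H] [TopologicalSpace H] [T2Space H]
    (f : G →* H) (hc : Continuous f) (hs : Function.Surjective f) : IsOpenMap f :=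
  (MonoidHom.isOpenQuotientMap_of_isQuotientMap (hc.isClosedMap.isQuotientMap hc hs)).isOpenMap

theorem isClosed_bohrSubgroup : IsClosed (bohrSubgroup : Set (ℝ → Circle)) := by
  have : (bohrSubgroup : Set (ℝ → Circle)) =
      ⋂ (x : ℝ) (y : ℝ), {ψ : ℝ → Circle | ψ (x + y) = ψ x * ψ y} := by
    ext ψ
    simp [bohrSubgroup]
  rw [this]
  exact isClosed_iInter fun x => isClosed_iInter fun y =>
    isClosed_eq (continuous_apply _) ((continuous_apply x).mul (continuous_apply y))

instance : CompactSpace GBohr :=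
  isCompact_iff_compactSpace.mp isClosed_bohrSubgroup.isCompact

namespace GBohr

noncomputable def ofAddMonoidHom (f : ℝ →+ ℝ) : GBohr :=
  ⟨fun x => Circle.exp (f x), fun x y => by simp [Circle.exp_add]⟩

def eval {ι : Type*} (l : ι → ℝ) : GBohr →* (ι → Circle) where
  toFun ψ i := (ψ : ℝ → Circle) (l i)
  map_one' := rfl
  map_mul' _ _ := rfl

theorem continuous_eval {ι : Type*} (l : ι → ℝ) : Continuous (eval l) :=
  continuous_pi fun i => (continuous_apply (l i)).comp continuous_subtype_val

theorem eval_surjective {ι : Type*} {l : ι → ℝ} (hl : LinearIndependent ℚ l) :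
    Function.Surjective (eval l) := by
  intro t
  choose a ha using fun i => Circle.exp_surjective (t i)
  obtain ⟨f, hf⟩ := hl.exists_linearMap_apply_eq a
  exact ⟨ofAddMonoidHom f.toAddMonoidHom, funext fun i => by simp [eval, ofAddMonoidHom, hf, ha]⟩

end GBohr

/-- For ℤ-independent reals `l₁, …, l_k`, the map
`π̂ : G_Bohr → 𝕋^k, ψ ↦ (ψ(l₁), …, ψ(l_k))` is continuous, surjective and open. -/
theorem statement7 {k : ℕ} (l : Fin k → ℝ) (hl : LinearIndependent ℚ l) :
    Continuous (fun ψ : GBohr => fun i : Fin k => (ψ : ℝ → Circle) (l i)) ∧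
    Function.Surjective (fun ψ : GBohr => fun i : Fin k => (ψ : ℝ → Circle) (l i)) ∧
    IsOpenMap (fun ψ : GBohr => fun i : Fin k => (ψ : ℝ → Circle) (l i)) :=
  ⟨GBohr.continuous_eval l, GBohr.eval_surjective hl,
    (GBohr.eval l).isOpenMap_of_compactSpace (GBohr.continuous_eval l) (GBohr.eval_surjective hl)⟩
end

section
/- Let r > 0 and 0 < τ < 2π. Then { A(τ,c) : c ∈ ℝ } ∩ { exp(t·τ₂) : t ∈ ℝ } = { I, −I }, where I is the 2×2 identity matrix and exp denotes the exponential of 2×2 complex matrices. -/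
open Matrix

/-- The matrix `τ₂ = [[0, −1], [1, 0]]`. -/
noncomputable def tau2 : Matrix (Fin 2) (Fin 2) ℂ := !![0, -1; 1, 0]

/-- The matrix `A(τ,c)` (for the parameter `r`), with `β_c = √(c²r² + 1/4)`. -/
noncomputable def Amat (r τ c : ℝ) : Matrix (Fin 2) (Fin 2) ℂ :=
  !![(Real.cos (Real.sqrt (c^2*r^2 + 1/4) * τ) : ℂ)
        + (Complex.I / (2 * (Real.sqrt (c^2*r^2 + 1/4) : ℂ)))
          * (Real.sin (Real.sqrt (c^2*r^2 + 1/4) * τ) : ℂ),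
      ((c * r / Real.sqrt (c^2*r^2 + 1/4)) * Real.sin (Real.sqrt (c^2*r^2 + 1/4) * τ) : ℝ);
    -(((c * r / Real.sqrt (c^2*r^2 + 1/4)) * Real.sin (Real.sqrt (c^2*r^2 + 1/4) * τ) : ℝ) : ℂ),
      (Real.cos (Real.sqrt (c^2*r^2 + 1/4) * τ) : ℂ)
        - (Complex.I / (2 * (Real.sqrt (c^2*r^2 + 1/4) : ℂ)))
          * (Real.sin (Real.sqrt (c^2*r^2 + 1/4) * τ) : ℂ)]

/-! Since `τ₂² = −1`, the algebra map `ℂ → M₂(ℂ)`, `i ↦ τ₂`, carries Euler's formula to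
`exp(tτ₂) = cos t • 1 + sin t • τ₂`, a matrix with real entries. The `(1,1)` entry of `A(τ,c)`
has imaginary part `sin(β_c τ)/(2β_c)`, so a common element forces `sin(β_c τ) = 0`, and then
`A(τ,c) = cos(β_c τ) • 1 = ±1`. Conversely `β_c` takes every value `≥ 1/2`, and `β_c = 2π/τ`,
`β_c = π/τ` give `1 = exp 0` and `−1 = exp(πτ₂)`. -/

theorem NormedSpace.exp_real_smul_of_mul_self_eq_neg_one {A : Type*} [NormedRing A]
    [NormedAlgebra ℝ A] [Algebra ℚ A] {J : A} (hJ : J * J = -1) (t : ℝ) :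
    NormedSpace.exp (t • J) = Real.cos t • 1 + Real.sin t • J := by
  let φ := Complex.liftAux J hJ
  have hφ : Continuous φ := φ.toLinearMap.continuous_of_finiteDimensional
  have htJ : φ (t * Complex.I) = t • J := by simp [φ, Complex.liftAux_apply]
  rw [← htJ, ← NormedSpace.map_exp φ hφ, ← Complex.exp_eq_exp_ℂ, Complex.liftAux_apply,
    Complex.exp_ofReal_mul_I_re, Complex.exp_ofReal_mul_I_im, Algebra.algebraMap_eq_smul_one]

lemma tau2_mul_self : tau2 * tau2 = -1 := by
  ext i j; fin_cases i <;> fin_cases j <;> simp [tau2]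

section
-- `exp` only depends on the topology, so any algebra norm on matrices serves here.
attribute [local instance] Matrix.linftyOpNormedRing Matrix.linftyOpNormedAlgebra

lemma exp_smul_tau2 (t : ℝ) :
    NormedSpace.exp ((t : ℂ) • tau2) = Real.cos t • 1 + Real.sin t • tau2 := by
  rw [Complex.coe_smul]
  exact NormedSpace.exp_real_smul_of_mul_self_eq_neg_one tau2_mul_self t

end

noncomputable def beta (r c : ℝ) : ℝ := Real.sqrt (c ^ 2 * r ^ 2 + 1 / 4)

lemma beta_pos (r c : ℝ) : 0 < beta r c := Real.sqrt_pos.2 (by positivity)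

lemma beta_sqrt_div {r b : ℝ} (hr : r ≠ 0) (hb : 1 / 2 ≤ b) :
    beta r (Real.sqrt (b ^ 2 - 1 / 4) / r) = b := by
  rw [beta, div_pow, Real.sq_sqrt (by nlinarith), div_mul_cancel₀ _ (pow_ne_zero 2 hr),
    sub_add_cancel, Real.sqrt_sq (by linarith)]

lemma Amat_apply_zero_zero_im (r τ c : ℝ) :
    (Amat r τ c 0 0).im = Real.sin (beta r c * τ) / (2 * beta r c) := by
  have hentry : Amat r τ c 0 0 = (Real.cos (beta r c * τ) : ℂ)
      + ((Real.sin (beta r c * τ) / (2 * beta r c) : ℝ) : ℂ) * Complex.I := by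
    simp only [Amat, beta, Matrix.of_apply, Matrix.cons_val', Matrix.cons_val_zero,
      Matrix.empty_val', Matrix.cons_val_fin_one]
    push_cast
    ring
  rw [hentry, Complex.add_im, Complex.ofReal_im, Complex.im_ofReal_mul, Complex.I_im, zero_add,
    mul_one]

lemma Amat_of_sin_eq_zero {r τ c : ℝ} (h : Real.sin (beta r c * τ) = 0) :
    Amat r τ c = Real.cos (beta r c * τ) • 1 := by
  rw [beta] at h
  ext i j; fin_cases i <;> fin_cases j <;> simp only [Amat, beta, h] <;> simp

lemma exists_Amat_eq_cos_smul_one {r b τ : ℝ} (hr : r ≠ 0) (hb : 1 / 2 ≤ b)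
    (h : Real.sin (b * τ) = 0) : ∃ c, Amat r τ c = Real.cos (b * τ) • 1 := by
  have hβ := beta_sqrt_div hr hb
  exact ⟨_, by rw [Amat_of_sin_eq_zero (by rwa [hβ]), hβ]⟩

/-- For `r > 0` and `0 < τ < 2π`,
`{A(τ,c) : c ∈ ℝ} ∩ {exp(t·τ₂) : t ∈ ℝ} = {I, −I}`. -/
theorem statement15 (r τ : ℝ) (hr : 0 < r) (hτ : 0 < τ) (hτ' : τ < 2 * Real.pi) :
    (Set.range fun c : ℝ => Amat r τ c) ∩
        (Set.range fun t : ℝ => NormedSpace.exp ((t : ℂ) • tau2))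
      = {(1 : Matrix (Fin 2) (Fin 2) ℂ), (-1 : Matrix (Fin 2) (Fin 2) ℂ)} := by
  ext A
  simp only [Set.mem_inter_iff, Set.mem_range, Set.mem_insert_iff, Set.mem_singleton_iff]
  constructor
  · rintro ⟨⟨c, rfl⟩, t, ht⟩
    have hsin : Real.sin (beta r c * τ) = 0 := by
      have him := congrArg (fun M => (M 0 0).im) ht
      rw [exp_smul_tau2, Amat_apply_zero_zero_im] at him
      simpa [tau2, (beta_pos r c).ne'] using him.symm
    rw [Amat_of_sin_eq_zero hsin]
    rcases Real.sin_eq_zero_iff_cos_eq.1 hsin with h | h <;> simp [h]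
  · have hπτ : 1 / 2 ≤ Real.pi / τ := by rw [le_div_iff₀ hτ]; linarith
    rintro (rfl | rfl)
    · have hb : 2 * Real.pi / τ * τ = 2 * Real.pi := div_mul_cancel₀ _ hτ.ne'
      obtain ⟨c, hc⟩ := exists_Amat_eq_cos_smul_one (b := 2 * Real.pi / τ) hr.ne'
        (by rw [mul_div_assoc]; linarith) (by rw [hb, Real.sin_two_pi])
      exact ⟨⟨c, by rw [hc, hb, Real.cos_two_pi, one_smul]⟩, 0, by simp⟩
    · have hb : Real.pi / τ * τ = Real.pi := div_mul_cancel₀ _ hτ.ne'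
      obtain ⟨c, hc⟩ := exists_Amat_eq_cos_smul_one hr.ne' hπτ (by rw [hb, Real.sin_pi])
      exact ⟨⟨c, by rw [hc, hb, Real.cos_pi, neg_one_smul]⟩, Real.pi, by rw [exp_smul_tau2]; simp⟩
end
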